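/- (The exponential-decay/duality step (3.22)–(3.26) of the covering lemma.) Let d ≥ 1, let W ≥ 0 be a locally integrable weight on ℝ^d, let 1 < p < ∞ and q = p/(p−1), and suppose the W-weighted strong maximal operator M_W is bounded on L^q(ℝ^d, W dx) with operator norm A. Let {S_k}_{k=1}^K (K ≤ ∞) be axis-parallel rectangles in ℝ^d with 0 < vol_W(S_k) < ∞, set E_k = S_k \\ ∪_{j<k} S_j, and suppose there is η > 0 with vol_W(E_k) ≥ η vol_W(S_k) for every k. Then ‖∑_{k} χ_{S_k}‖_{L^p(ℝ^d, W dx)} ≤ (A/η) · vol_W(∪_k S_k)^{1/p}. -/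

import Mathlib

open MeasureTheory ENNReal Set

noncomputable section

/-- An axis-parallel rectangle (box) in `ℝ^d`: a product of `d` bounded intervals. -/
def IsBox {d : ℕ} (S : Set (Fin d → ℝ)) : Prop :=
  ∃ I : Fin d → Set ℝ, (∀ i, Bornology.IsBounded (I i) ∧ (I i).OrdConnected) ∧
    S = Set.univ.pi I

/-- The measure `W(x) dx` on `ℝ^d`; `wVol W E = vol_W(E) = ∫_E W`. -/
def wVol {d : ℕ} (W : (Fin d → ℝ) → ℝ) : Measure (Fin d → ℝ) :=
  volume.withDensity fun x => ENNReal.ofReal (W x)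

/-- The `W`-weighted strong maximal operator on `ℝ^d`:
`M_W f(x) = sup_{R ∋ x} (∫_R W)⁻¹ ∫_R |f| W`, the supremum over all axis-parallel
rectangles `R` containing `x`. -/
def maxW {d : ℕ} (W : (Fin d → ℝ) → ℝ) (f : (Fin d → ℝ) → ℝ) (x : Fin d → ℝ) : ℝ≥0∞ :=
  ⨆ (R : Set (Fin d → ℝ)) (_ : IsBox R ∧ x ∈ R),
    (wVol W R)⁻¹ * ∫⁻ y in R, ENNReal.ofReal |f y| ∂(wVol W)

lemma IsBox.measurableSet {d : ℕ} {S : Set (Fin d → ℝ)} (h : IsBox S) : MeasurableSet S := by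
  obtain ⟨I, hI, rfl⟩ := h
  exact MeasurableSet.univ_pi fun i => (hI i).2.measurableSet

/-- **Exponential-decay/duality step (3.22)–(3.26).** Let `W ≥ 0` be a locally
integrable weight on `ℝ^d`, `1 < p < ∞`, `q = p/(p−1)`, and suppose `M_W` is bounded on
`L^q(ℝ^d, W dx)` with operator norm `A`.  Let `{S_k}_{k<K}` (`K ≤ ∞`) be axis-parallel
rectangles with `0 < vol_W(S_k) < ∞`, set `E_k = S_k \ ∪_{j<k} S_j`, and suppose
`vol_W(E_k) ≥ η vol_W(S_k)` for every `k`.  Then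
`‖∑_k χ_{S_k}‖_{L^p(W dx)} ≤ (A/η) vol_W(∪_k S_k)^{1/p}`. -/
theorem duality_step
    (d : ℕ) (hd : 1 ≤ d)
    (W : (Fin d → ℝ) → ℝ) (hW0 : ∀ x, 0 ≤ W x) (hWm : Measurable W)
    (hWloc : LocallyIntegrable W volume)
    (p q : ℝ) (hp : 1 < p) (hq : q = p / (p - 1))
    (A : ℝ) (hA : 0 < A)
    (hbound : ∀ f : (Fin d → ℝ) → ℝ, MemLp f (ENNReal.ofReal q) (wVol W) →
      (∫⁻ x, maxW W f x ^ q ∂(wVol W)) ^ (1 / q) ≤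
        ENNReal.ofReal A * eLpNorm f (ENNReal.ofReal q) (wVol W))
    (K : ℕ∞) (S : ℕ → Set (Fin d → ℝ))
    (hSbox : ∀ k : ℕ, (k : ℕ∞) < K → IsBox (S k))
    (hS0 : ∀ k : ℕ, (k : ℕ∞) < K → 0 < wVol W (S k))
    (hSfin : ∀ k : ℕ, (k : ℕ∞) < K → wVol W (S k) < ⊤)
    (η : ℝ) (hη : 0 < η)
    (hE : ∀ k : ℕ, (k : ℕ∞) < K →
      ENNReal.ofReal η * wVol W (S k) ≤ wVol W (S k \ ⋃ j, ⋃ (_ : j < k), S j)) :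
    (∫⁻ x, (∑' k : {k : ℕ // (k : ℕ∞) < K}, (S k.1).indicator (fun _ => (1 : ℝ≥0∞)) x) ^ p
        ∂(wVol W)) ^ (1 / p) ≤
      ENNReal.ofReal (A / η) *
        (wVol W (⋃ k : ℕ, ⋃ (_ : (k : ℕ∞) < K), S k)) ^ (1 / p) := by
  classical
  set μ := wVol W with hμdef
  have hp0 : (0:ℝ) < p := lt_trans one_pos hp
  have hpq : p.HolderConjugate q := (Real.holderConjugate_iff_eq_conjExponent hp).2 hq
  have hq0 : (0:ℝ) < q := hpq.symm.pos
  have hpq1 : (p - 1) * q = p := by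
    have hps : p - 1 ≠ 0 := sub_ne_zero.2 hp.ne'
    rw [hq]; field_simp
  have hinv : 1/q + 1/p = 1 := by
    rw [one_div, one_div, add_comm]; exact hpq.inv_add_inv_eq_one
  have hSm : ∀ k : ℕ, (k : ℕ∞) < K → MeasurableSet (S k) := fun k hk =>
    (hSbox k hk).measurableSet
  set U : Set (Fin d → ℝ) := ⋃ k : ℕ, ⋃ (_ : (k : ℕ∞) < K), S k with hUdef
  have hUm : MeasurableSet U :=
    MeasurableSet.iUnion fun k => MeasurableSet.iUnion fun hk => hSm k hk
  set T : ℕ → Finset ℕ := fun N => (Finset.range N).filter (fun k => (k:ℕ∞) < K) with hTdef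
  have hTK : ∀ N, ∀ k ∈ T N, (k:ℕ∞) < K := fun N k hk => (Finset.mem_filter.1 hk).2
  set G : ℕ → (Fin d → ℝ) → ℝ≥0∞ :=
    fun N x => ∑ k ∈ T N, (S k).indicator (fun _ => (1:ℝ≥0∞)) x with hGdef
  have hGm : ∀ N, Measurable (G N) := fun N =>
    Finset.measurable_sum _ fun k hk => measurable_const.indicator (hSm k (hTK N k hk))
  have hGmono : ∀ x, Monotone fun N => G N x := by
    intro x N M hNM
    apply Finset.sum_le_sum_of_subset
    exact Finset.filter_subset_filter _ (Finset.range_subset_range.2 hNM)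
  have hindle : ∀ (V : Set (Fin d → ℝ)) x, V.indicator (fun _ => (1:ℝ≥0∞)) x ≤ 1 := by
    intro V x
    by_cases hx : x ∈ V <;> simp [Set.indicator_apply, hx]
  have hGtop : ∀ N x, G N x ≠ ⊤ := by
    intro N x
    refine (lt_of_le_of_lt (Finset.sum_le_card_nsmul _ _ 1 fun k _ => hindle _ x) ?_).ne
    simp only [nsmul_eq_mul, mul_one]
    exact ENNReal.natCast_lt_top _
  set E : ℕ → Set (Fin d → ℝ) := fun k => S k \ ⋃ j, ⋃ (_ : j < k), S j with hEdef
  have hEm : ∀ k : ℕ, (k:ℕ∞) < K → MeasurableSet (E k) := by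
    intro k hk
    refine (hSm k hk).diff (MeasurableSet.iUnion fun j => MeasurableSet.iUnion fun hj => ?_)
    exact hSm j (lt_trans (by exact_mod_cast hj) hk)
  have hESub : ∀ k, E k ⊆ S k := fun k => diff_subset
  have hSU : ∀ k : ℕ, (k:ℕ∞) < K → S k ⊆ U := fun k hk x hx => mem_iUnion₂.2 ⟨k, hk, hx⟩
  have hEdisj : ∀ j k : ℕ, j < k → ∀ x, x ∈ E j → x ∈ E k → False := by
    intro j k hjk x hxj hxk
    exact hxk.2 (mem_iUnion₂.2 ⟨j, hjk, hxj.1⟩)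
  set RHS : ℝ≥0∞ := ENNReal.ofReal (A / η) * (μ U) ^ (1/p) with hRHS
  have key : ∀ N, (∫⁻ x, G N x ^ p ∂μ) ≤ RHS ^ p := by
    intro N
    set L : ℝ≥0∞ := ∫⁻ x, G N x ^ p ∂μ with hL
    -- L is finite
    have hUNfin : μ (⋃ k ∈ T N, S k) < ⊤ := by
      refine lt_of_le_of_lt (measure_biUnion_finset_le _ _) ?_
      exact ENNReal.sum_lt_top.2 fun k hk => hSfin k (hTK N k hk)
    have hLfin : L ≠ ⊤ := by
      have hpt : ∀ x, G N x ^ p ≤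
          (⋃ k ∈ T N, S k).indicator (fun _ => ((T N).card : ℝ≥0∞) ^ p) x := by
        intro x
        by_cases hx : x ∈ ⋃ k ∈ T N, S k
        · rw [Set.indicator_of_mem hx]
          refine ENNReal.rpow_le_rpow ?_ hp0.le
          refine le_trans (Finset.sum_le_card_nsmul _ _ 1 fun k _ => hindle _ x) ?_
          simp [nsmul_eq_mul]
        · rw [Set.indicator_of_notMem hx]
          have : G N x = 0 := Finset.sum_eq_zero fun k hk =>
            Set.indicator_of_notMem (fun hxk => hx (mem_biUnion hk hxk)) _
          rw [this, ENNReal.zero_rpow_of_pos hp0]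
      have hUNm : MeasurableSet (⋃ k ∈ T N, S k) :=
        (T N).measurableSet_biUnion fun k hk => hSm k (hTK N k hk)
      refine ((lintegral_mono hpt).trans_lt ?_).ne
      rw [lintegral_indicator_const hUNm]
      exact ENNReal.mul_lt_top
        (ENNReal.rpow_lt_top_of_nonneg hp0.le (ENNReal.natCast_ne_top _)) hUNfin
    rcases eq_or_ne L 0 with hL0 | hL0
    · rw [hL0]; exact zero_le
    -- the dual function g
    have hp1 : (0:ℝ) ≤ p - 1 := by linarith
    set g : (Fin d → ℝ) → ℝ := fun x => ((G N x) ^ (p-1)).toReal with hgdef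
    have hgm : Measurable g := ((hGm N).pow_const (p-1)).ennreal_toReal
    have hofg : ∀ x, ENNReal.ofReal |g x| = G N x ^ (p-1) := by
      intro x
      rw [hgdef]
      rw [abs_of_nonneg ENNReal.toReal_nonneg,
        ENNReal.ofReal_toReal (ENNReal.rpow_ne_top_of_nonneg hp1 (hGtop N x))]
    have hgq : ∀ x, ‖g x‖ₑ ^ q = G N x ^ p := by
      intro x
      rw [Real.enorm_eq_ofReal_abs, hofg, ← ENNReal.rpow_mul, hpq1]
    have hq0' : ENNReal.ofReal q ≠ 0 := by
      simp [ENNReal.ofReal_eq_zero, not_le, hq0]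
    have heLp : eLpNorm g (ENNReal.ofReal q) μ = L ^ (1/q) := by
      rw [eLpNorm_eq_lintegral_rpow_enorm_toReal hq0' ENNReal.ofReal_ne_top,
        ENNReal.toReal_ofReal hq0.le]
      congr 1
      rw [hL]
      exact lintegral_congr fun x => hgq x
    have hmem : MemLp g (ENNReal.ofReal q) μ :=
      ⟨hgm.aestronglyMeasurable, by
        rw [heLp]; exact ENNReal.rpow_lt_top_of_nonneg (by positivity) hLfin⟩
    -- the averages c k and the minorant m of the maximal function
    set c : ℕ → ℝ≥0∞ := fun k => (μ (S k))⁻¹ * ∫⁻ y in S k, G N y ^ (p-1) ∂μ with hcdef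
    set m : (Fin d → ℝ) → ℝ≥0∞ := fun x => ∑ k ∈ T N, (E k).indicator (fun _ => c k) x
      with hmdef
    have hmm : Measurable m := Finset.measurable_sum _ fun k hk =>
      measurable_const.indicator (hEm k (hTK N k hk))
    have hmle : ∀ x, m x ≤ maxW W g x := by
      intro x
      by_cases hx : ∃ k₀ ∈ T N, x ∈ E k₀
      · obtain ⟨k₀, hk₀T, hxk₀⟩ := hx
        have hmx : m x = c k₀ := by
          have h1 : (∑ k ∈ T N, (E k).indicator (fun _ => c k) x)
              = (E k₀).indicator (fun _ => c k₀) x :=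
            Finset.sum_eq_single_of_mem k₀ hk₀T fun k hkT hne => by
              apply Set.indicator_of_notMem
              intro hxk
              rcases lt_or_gt_of_ne hne with h | h
              · exact hEdisj k k₀ h x hxk hxk₀
              · exact hEdisj k₀ k h x hxk₀ hxk
          calc m x = (E k₀).indicator (fun _ => c k₀) x := h1
            _ = c k₀ := Set.indicator_of_mem hxk₀ _
        rw [hmx]
        have hKk₀ := hTK N k₀ hk₀T
        have hxS : x ∈ S k₀ := (hESub k₀) hxk₀
        have hle : (wVol W (S k₀))⁻¹ * ∫⁻ y in S k₀, ENNReal.ofReal |g y| ∂(wVol W) ≤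
            maxW W g x := by
          rw [maxW]
          exact le_iSup₂_of_le (S k₀) ⟨hSbox k₀ hKk₀, hxS⟩ le_rfl
        refine le_trans (le_of_eq ?_) hle
        show (μ (S k₀))⁻¹ * ∫⁻ y in S k₀, G N y ^ (p-1) ∂μ
            = (wVol W (S k₀))⁻¹ * ∫⁻ y in S k₀, ENNReal.ofReal |g y| ∂(wVol W)
        rw [← hμdef]
        congr 1
        exact lintegral_congr fun y => (hofg y).symm
      · push_neg at hx
        have : m x = 0 := Finset.sum_eq_zero fun k hk =>
          Set.indicator_of_notMem (hx k hk) _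
        rw [this]; exact zero_le
    -- splitting the L^p norm
    have hGsplit : ∀ x, G N x ^ p =
        ∑ k ∈ T N, (S k).indicator (fun _ => (1:ℝ≥0∞)) x * G N x ^ (p-1) := by
      intro x
      rw [← Finset.sum_mul]
      have hGx : (∑ k ∈ T N, (S k).indicator (fun _ => (1:ℝ≥0∞)) x) = G N x := rfl
      rw [hGx]
      by_cases h0 : G N x = 0
      · rw [h0, ENNReal.zero_rpow_of_pos hp0, zero_mul]
      · have h1 : (1:ℝ) + (p-1) = p := by ring
        calc G N x ^ p = G N x ^ ((1:ℝ) + (p-1)) := by rw [h1]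
          _ = G N x ^ (1:ℝ) * G N x ^ (p-1) := ENNReal.rpow_add _ _ h0 (hGtop N x)
          _ = G N x * G N x ^ (p-1) := by rw [ENNReal.rpow_one]
    have hsplit : L = ∑ k ∈ T N, ∫⁻ y in S k, G N y ^ (p-1) ∂μ := by
      rw [hL, lintegral_congr hGsplit,
        lintegral_finset_sum _ (f := fun k y => (S k).indicator (fun _ => (1:ℝ≥0∞)) y * G N y ^ (p-1)) (fun k hk =>
          (measurable_const.indicator (hSm k (hTK N k hk))).mul ((hGm N).pow_const (p-1)))]
      refine Finset.sum_congr rfl fun k hk => ?_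
      rw [← lintegral_indicator (hSm k (hTK N k hk))]
      refine lintegral_congr fun y => ?_
      by_cases hy : y ∈ S k <;> simp [Set.indicator_apply, hy]
    have hck : ∀ k ∈ T N, ∫⁻ y in S k, G N y ^ (p-1) ∂μ = μ (S k) * c k := by
      intro k hk
      have h1 := hS0 k (hTK N k hk)
      have h2 := hSfin k (hTK N k hk)
      rw [hcdef, ← mul_assoc, ENNReal.mul_inv_cancel h1.ne' h2.ne, one_mul]
    have hηL : ENNReal.ofReal η * L ≤ ∫⁻ x, m x ∂μ := by
      have hmint : ∫⁻ x, m x ∂μ = ∑ k ∈ T N, c k * μ (E k) := by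
        rw [hmdef, lintegral_finset_sum _ (fun k hk =>
          measurable_const.indicator (hEm k (hTK N k hk)))]
        exact Finset.sum_congr rfl fun k hk => lintegral_indicator_const (hEm k (hTK N k hk)) _
      rw [hmint, hsplit, Finset.mul_sum]
      refine Finset.sum_le_sum fun k hk => ?_
      rw [hck k hk, ← mul_assoc]
      calc ENNReal.ofReal η * μ (S k) * c k ≤ μ (E k) * c k :=
            mul_le_mul_left (hE k (hTK N k hk)) _
        _ = c k * μ (E k) := mul_comm _ _
    -- Hölder
    have hmU : ∀ x, m x = U.indicator (fun _ => (1:ℝ≥0∞)) x * m x := by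
      intro x
      by_cases hx : x ∈ U
      · rw [Set.indicator_of_mem hx, one_mul]
      · have : m x = 0 := Finset.sum_eq_zero fun k hk => Set.indicator_of_notMem
          (fun hxE => hx (hSU k (hTK N k hk) (hESub k hxE))) _
        rw [this, mul_zero]
    have hindp : ∫⁻ x, U.indicator (fun _ => (1:ℝ≥0∞)) x ^ p ∂μ = μ U := by
      have hpt : ∀ x, U.indicator (fun _ => (1:ℝ≥0∞)) x ^ p
          = U.indicator (fun _ => (1:ℝ≥0∞)) x := by
        intro x
        by_cases hx : x ∈ U <;>
          simp [Set.indicator_apply, hx, ENNReal.one_rpow, ENNReal.zero_rpow_of_pos hp0]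
      rw [lintegral_congr hpt, lintegral_indicator_const hUm, one_mul]
    have hHolder : ∫⁻ x, m x ∂μ ≤ μ U ^ (1/p) * (∫⁻ x, m x ^ q ∂μ) ^ (1/q) := by
      have h := ENNReal.lintegral_mul_le_Lp_mul_Lq μ hpq
        (f := fun x => U.indicator (fun _ => (1:ℝ≥0∞)) x) (g := m)
        ((measurable_const.indicator hUm).aemeasurable) hmm.aemeasurable
      simp only [Pi.mul_apply] at h
      calc ∫⁻ x, m x ∂μ = ∫⁻ x, U.indicator (fun _ => (1:ℝ≥0∞)) x * m x ∂μ :=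
            lintegral_congr hmU
        _ ≤ (∫⁻ x, U.indicator (fun _ => (1:ℝ≥0∞)) x ^ p ∂μ) ^ (1/p)
              * (∫⁻ x, m x ^ q ∂μ) ^ (1/q) := h
        _ = μ U ^ (1/p) * (∫⁻ x, m x ^ q ∂μ) ^ (1/q) := by rw [hindp]
    have hmq : (∫⁻ x, m x ^ q ∂μ) ^ (1/q) ≤ ENNReal.ofReal A * L ^ (1/q) := by
      calc (∫⁻ x, m x ^ q ∂μ) ^ (1/q) ≤ (∫⁻ x, maxW W g x ^ q ∂μ) ^ (1/q) :=
            ENNReal.rpow_le_rpow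
              (lintegral_mono fun x => ENNReal.rpow_le_rpow (hmle x) hq0.le) (by positivity)
        _ ≤ ENNReal.ofReal A * eLpNorm g (ENNReal.ofReal q) μ := hbound g hmem
        _ = ENNReal.ofReal A * L ^ (1/q) := by rw [heLp]
    have main : ENNReal.ofReal η * L ≤ ENNReal.ofReal A * L ^ (1/q) * μ U ^ (1/p) := by
      calc ENNReal.ofReal η * L ≤ ∫⁻ x, m x ∂μ := hηL
        _ ≤ μ U ^ (1/p) * (∫⁻ x, m x ^ q ∂μ) ^ (1/q) := hHolder
        _ ≤ μ U ^ (1/p) * (ENNReal.ofReal A * L ^ (1/q)) := mul_le_mul_right hmq _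
        _ = ENNReal.ofReal A * L ^ (1/q) * μ U ^ (1/p) := by ring
    -- algebra to conclude the per-N bound
    have hLq_ne0 : L ^ (1/q) ≠ 0 :=
      (ENNReal.rpow_pos (zero_lt_iff.2 hL0) hLfin).ne'
    have hLq_netop : L ^ (1/q) ≠ ⊤ :=
      ENNReal.rpow_ne_top_of_nonneg (by positivity) hLfin
    have hLsplit : L = L ^ (1/q) * L ^ (1/p) := by
      rw [← ENNReal.rpow_add _ _ hL0 hLfin, hinv, ENNReal.rpow_one]
    have step : ENNReal.ofReal η * L ^ (1/p) ≤ ENNReal.ofReal A * μ U ^ (1/p) := by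
      have hLs : ENNReal.ofReal η * L = L ^ (1/q) * (ENNReal.ofReal η * L ^ (1/p)) := by
        conv_lhs => rw [hLsplit]
        ring
      have h2 : L ^ (1/q) * (ENNReal.ofReal η * L ^ (1/p)) ≤
          L ^ (1/q) * (ENNReal.ofReal A * μ U ^ (1/p)) := by
        calc L ^ (1/q) * (ENNReal.ofReal η * L ^ (1/p)) = ENNReal.ofReal η * L := hLs.symm
          _ ≤ ENNReal.ofReal A * L ^ (1/q) * μ U ^ (1/p) := main
          _ = L ^ (1/q) * (ENNReal.ofReal A * μ U ^ (1/p)) := by ring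
      exact (ENNReal.mul_le_mul_iff_right hLq_ne0 hLq_netop).1 h2
    have hηne : ENNReal.ofReal η ≠ 0 := by
      simp [ENNReal.ofReal_eq_zero, not_le, hη]
    have hfinalN : L ^ (1/p) ≤ RHS := by
      have h3 : L ^ (1/p) ≤ (ENNReal.ofReal A * μ U ^ (1/p)) / ENNReal.ofReal η :=
        (ENNReal.le_div_iff_mul_le (Or.inl hηne) (Or.inl ENNReal.ofReal_ne_top)).2
          (by rw [mul_comm]; exact step)
      refine h3.trans (le_of_eq ?_)
      rw [hRHS, ENNReal.ofReal_div_of_pos hη]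
      simp only [div_eq_mul_inv]
      ring
    calc L = (L ^ (1/p)) ^ p := by
          rw [← ENNReal.rpow_mul, one_div_mul_cancel hp0.ne', ENNReal.rpow_one]
      _ ≤ RHS ^ p := ENNReal.rpow_le_rpow hfinalN hp0.le
  -- identify the series with the increasing limit of the G N
  have hFeq : ∀ x, (∑' k : {k : ℕ // (k : ℕ∞) < K},
      (S k.1).indicator (fun _ => (1:ℝ≥0∞)) x) = ⨆ N, G N x := by
    intro x
    have h1 : (∑' k : {k : ℕ // (k : ℕ∞) < K}, (S k.1).indicator (fun _ => (1:ℝ≥0∞)) x)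
        = ∑' k : ℕ, Set.indicator {k : ℕ | (k : ℕ∞) < K}
            (fun k => (S k).indicator (fun _ => (1:ℝ≥0∞)) x) k :=
      tsum_subtype {k : ℕ | (k : ℕ∞) < K} (fun k => (S k).indicator (fun _ => (1:ℝ≥0∞)) x)
    rw [h1, ENNReal.tsum_eq_iSup_nat]
    refine iSup_congr fun N => ?_
    show ∑ k ∈ Finset.range N, Set.indicator {k : ℕ | (k:ℕ∞) < K}
        (fun j : ℕ => (S j).indicator (fun _ => (1:ℝ≥0∞)) x) k
      = ∑ k ∈ (Finset.range N).filter (fun j : ℕ => (j:ℕ∞) < K),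
        (S k).indicator (fun _ => (1:ℝ≥0∞)) x
    rw [Finset.sum_filter]
    refine Finset.sum_congr rfl fun k _ => ?_
    by_cases hk : (k:ℕ∞) < K <;>
      simp [Set.indicator_apply, Set.mem_setOf_eq, hk]
  have hGsup : ∀ x, (⨆ N, G N x) ^ p = ⨆ N, (G N x) ^ p := by
    intro x
    have hmono : Monotone fun N => G N x := hGmono x
    have ht : Filter.Tendsto (fun N => G N x) Filter.atTop (nhds (⨆ N, G N x)) :=
      tendsto_atTop_iSup hmono
    have ht2 : Filter.Tendsto (fun N => (G N x) ^ p) Filter.atTop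
        (nhds ((⨆ N, G N x) ^ p)) :=
      (ENNReal.continuous_rpow_const.tendsto _).comp ht
    have hmono2 : Monotone fun N => (G N x) ^ p := fun a b hab =>
      ENNReal.rpow_le_rpow (hmono hab) hp0.le
    exact tendsto_nhds_unique ht2 (tendsto_atTop_iSup hmono2)
  have hlim : (∫⁻ x, (∑' k : {k : ℕ // (k : ℕ∞) < K},
      (S k.1).indicator (fun _ => (1:ℝ≥0∞)) x) ^ p ∂μ)
      = ⨆ N, ∫⁻ x, G N x ^ p ∂μ := by
    rw [lintegral_congr fun x => by rw [hFeq x, hGsup x]]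
    exact lintegral_iSup (fun N => (hGm N).pow_const p)
      (fun a b hab x => ENNReal.rpow_le_rpow (hGmono x hab) hp0.le)
  rw [hlim]
  calc (⨆ N, ∫⁻ x, G N x ^ p ∂μ) ^ (1/p) ≤ (RHS ^ p) ^ (1/p) :=
        ENNReal.rpow_le_rpow (iSup_le key) (by positivity)
    _ = RHS := by
        rw [← ENNReal.rpow_mul, mul_one_div_cancel hp0.ne', ENNReal.rpow_one]
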